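/- Assume that for i = 1,2 the initial datum satisfies lim_{‖x‖→∞} φ_i(x) = sup_{x∈ℝⁿ} φ_i(x) (limit along the filter of complements of compact subsets of ℝⁿ). If (u₁,u₂) is a mild solution on [0,T), then for every t ∈ [0,T), i = 1,2 and j = 3−i: liminf_{‖x‖→∞} u_i(t,x) ≥ sup_{ℝⁿ} φ_i + ∫₀ᵗ h_i(s)·(liminf_{‖x‖→∞} u_i(s,x))^{p_ii}·(liminf_{‖x‖→∞} u_j(s,x))^{p_ij} ds, where liminf_{‖x‖→∞} is the limit inferior along the filter of complements of compact subsets of ℝⁿ. -/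

import Mathlib

open MeasureTheory Set Filter

/-- The Gaussian heat kernel `G(t,x) = (4πt)^(-n/2) exp(-‖x‖²/(4t))` on `ℝⁿ`. -/
noncomputable def gaussianKernel (n : ℕ) (t : ℝ) (x : EuclideanSpace ℝ (Fin n)) : ℝ :=
  (4 * Real.pi * t) ^ (-(n : ℝ) / 2) * Real.exp (-‖x‖ ^ 2 / (4 * t))

/-- `Kint k s t = ∫_s^t k(r) dr`. -/
noncomputable def Kint (k : ℝ → ℝ) (s t : ℝ) : ℝ := ∫ r in s..t, k r

/-- A mild solution of the reaction-diffusion system on the half-open time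
interval `[0,T)`: a pair of nonnegative measurable functions, bounded on
`[0,t'] × ℝⁿ` for every `t' < T`, with initial data `φ`, satisfying the
Duhamel integral equations for every `t ∈ (0,T)` and `x ∈ ℝⁿ`. -/
def IsMildSolutionIco (n : ℕ) (p : Fin 2 → Fin 2 → ℝ) (h k : Fin 2 → ℝ → ℝ)
    (φ : Fin 2 → EuclideanSpace ℝ (Fin n) → ℝ) (T : ℝ)
    (u : Fin 2 → ℝ → EuclideanSpace ℝ (Fin n) → ℝ) : Prop :=
  (∀ i, Measurable (Function.uncurry (u i))) ∧
  (∀ i t x, 0 ≤ u i t x) ∧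
  (∀ t' : ℝ, t' < T → ∃ C : ℝ, ∀ i, ∀ t ∈ Set.Icc (0:ℝ) t', ∀ x, u i t x ≤ C) ∧
  (∀ i x, u i 0 x = φ i x) ∧
  (∀ i, ∀ t ∈ Set.Ioo (0:ℝ) T, ∀ x,
    u i t x =
      (∫ y, gaussianKernel n (Kint (k i) 0 t) (x - y) * φ i y) +
        ∫ s in (0:ℝ)..t,
          h i s *
            ∫ y, gaussianKernel n (Kint (k i) s t) (x - y) *
              (u i s y ^ p i i * u (1 - i) s y ^ p i (1 - i)))

open Topology

/-! The mild formulation writes `uᵢ(t)` as the heat semigroup applied to `φᵢ` plus a time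
integral of the heat semigroup applied to the reaction term. Convolution with a probability
density that vanishes at infinity does not decrease the liminf at infinity of a bounded
nonnegative function, because the mass the kernel puts on any fixed compact set escapes to zero.
Applied to the first term this gives `sup φᵢ`. In the second term, Fatou's lemma along the
countably generated cocompact filter moves the liminf inside the time integral, and monotonicity
and continuity of `x ↦ x ^ p` bound the liminf of the reaction term below by
`(liminf uᵢ)^{pᵢᵢ} (liminf uⱼ)^{pᵢⱼ}`. Superadditivity of liminf adds the two bounds. -/

section Liminf

variable {α : Type*} {l : Filter α} {f g : α → ℝ}

lemma liminf_rpow [l.NeBot] (hf0 : ∀ x, 0 ≤ f x) (hf : IsBoundedUnder (· ≤ ·) l f) {q : ℝ}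
    (hq : 0 ≤ q) : liminf f l ^ q = liminf (fun x => f x ^ q) l := by
  have hmono : Monotone fun x : ℝ => max x 0 ^ q := fun a b hab =>
    Real.rpow_le_rpow (le_max_right a 0) (max_le_max_right 0 hab) hq
  have key := hmono.map_liminf_of_continuousAt f
    (((Real.continuous_rpow_const hq).comp (continuous_id.max continuous_const)).continuousAt)
    hf.isCoboundedUnder_ge (isBoundedUnder_of ⟨0, hf0⟩)
  have hcomp : (fun x : ℝ => max x 0 ^ q) ∘ f = fun x => f x ^ q :=
    funext fun x => by rw [Function.comp_apply, max_eq_left (hf0 x)]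
  rwa [hcomp, max_eq_left (le_liminf_of_le hf.isCoboundedUnder_ge (.of_forall hf0))] at key

lemma rpow_liminf_mul_rpow_liminf_le [l.NeBot] (hf0 : ∀ x, 0 ≤ f x)
    (hf : IsBoundedUnder (· ≤ ·) l f) (hg0 : ∀ x, 0 ≤ g x) (hg : IsBoundedUnder (· ≤ ·) l g)
    {p q : ℝ} (hp : 0 ≤ p) (hq : 0 ≤ q) :
    liminf f l ^ p * liminf g l ^ q ≤ liminf (fun x => f x ^ p * g x ^ q) l := by
  rw [liminf_rpow hf0 hf hp, liminf_rpow hg0 hg hq]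
  obtain ⟨C, hC⟩ := hg.eventually_le
  refine le_liminf_mul (.of_forall fun x => Real.rpow_nonneg (hf0 x) p) ?_
    (.of_forall fun x => Real.rpow_nonneg (hg0 x) q) ?_
  · obtain ⟨D, hD⟩ := hf.eventually_le
    exact isBoundedUnder_of_eventually_le (a := D ^ p)
      (hD.mono fun x hx => Real.rpow_le_rpow (hf0 x) hx hp)
  · exact isCoboundedUnder_ge_of_eventually_le l (x := C ^ q)
      (hC.mono fun x hx => Real.rpow_le_rpow (hg0 x) hx hq)

lemma le_liminf_add_of_nonneg [l.NeBot] {C : ℝ} (hf0 : ∀ x, 0 ≤ f x) (hg0 : ∀ x, 0 ≤ g x)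
    (hfg : ∀ x, f x + g x ≤ C) : liminf f l + liminf g l ≤ liminf (fun x => f x + g x) l :=
  le_liminf_add (isBoundedUnder_of ⟨0, hf0⟩)
    (isBoundedUnder_of ⟨C, fun x => (le_add_of_nonneg_right (hg0 x)).trans (hfg x)⟩)
    (isBoundedUnder_of ⟨0, hg0⟩)
    (isBoundedUnder_of ⟨C, fun x =>
      (le_add_of_nonneg_left (hf0 x)).trans (hfg x)⟩).isCoboundedUnder_ge

lemma ENNReal.ofReal_liminf [l.NeBot] {C : ℝ} (hf0 : ∀ x, 0 ≤ f x) (hfC : ∀ x, f x ≤ C) :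
    ENNReal.ofReal (liminf f l) = liminf (fun x => ENNReal.ofReal (f x)) l :=
  ENNReal.ofReal_mono.map_liminf_of_continuousAt f ENNReal.continuous_ofReal.continuousAt
    (isBoundedUnder_of ⟨C, hfC⟩).isCoboundedUnder_ge (isBoundedUnder_of ⟨0, hf0⟩)

end Liminf

lemma integral_le_liminf_integral {ι β : Type*} [MeasurableSpace β] {μ : Measure β}
    [IsFiniteMeasure μ] {l : Filter ι} [l.NeBot] [l.IsCountablyGenerated] {f : ι → β → ℝ}
    {g : β → ℝ} {D : ℝ} (hf : ∀ i, AEStronglyMeasurable (f i) μ)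
    (hfD : ∀ᵐ b ∂μ, ∀ i, f i b ∈ Icc 0 D) (hg : ∀ᵐ b ∂μ, g b ≤ liminf (fun i => f i b) l) :
    ∫ b, g b ∂μ ≤ liminf (fun i => ∫ b, f i b ∂μ) l := by
  have hfi : ∀ i, Integrable (f i) μ := fun i =>
    (integrable_const D).mono' (hf i) (hfD.mono fun b hb => by
      rw [Real.norm_of_nonneg (hb i).1]; exact (hb i).2)
  have hint0 : ∀ i, 0 ≤ ∫ b, f i b ∂μ := fun i =>
    integral_nonneg_of_ae (hfD.mono fun b hb => (hb i).1)
  have hintD : ∀ i, ∫ b, f i b ∂μ ≤ D * μ.real univ := fun i => by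
    simpa [mul_comm] using
      integral_mono_ae (hfi i) (integrable_const D) (hfD.mono fun b hb => (hb i).2)
  have hlim0 : 0 ≤ liminf (fun i => ∫ b, f i b ∂μ) l :=
    le_liminf_of_le (isBoundedUnder_of ⟨_, hintD⟩).isCoboundedUnder_ge (.of_forall hint0)
  by_cases hgi : Integrable g μ
  swap
  · rwa [integral_undef hgi]
  -- Fatou's lemma for `ℝ≥0∞`-valued functions, applied to the positive part of `g`
  refine (integral_mono hgi hgi.pos_part fun b => le_max_left _ _).trans ?_
  rw [← ENNReal.ofReal_le_ofReal_iff hlim0, ofReal_integral_eq_lintegral_ofReal hgi.pos_part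
    (.of_forall fun b => le_max_right _ _), ENNReal.ofReal_liminf hint0 hintD]
  calc ∫⁻ b, ENNReal.ofReal (max (g b) 0) ∂μ
      ≤ ∫⁻ b, liminf (fun i => ENNReal.ofReal (f i b)) l ∂μ := by
        refine lintegral_mono_ae ?_
        filter_upwards [hg, hfD] with b hb hbD
        rw [← ENNReal.ofReal_liminf (fun i => (hbD i).1) fun i => (hbD i).2, ENNReal.ofReal_max,
          ENNReal.ofReal_zero, max_eq_left zero_le]
        exact ENNReal.ofReal_le_ofReal hb
    _ ≤ liminf (fun i => ∫⁻ b, ENNReal.ofReal (f i b) ∂μ) l :=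
        lintegral_liminf_le' fun i => (hf i).aemeasurable.ennreal_ofReal
    _ = liminf (fun i => ENNReal.ofReal (∫ b, f i b ∂μ)) l := by
        congr with i
        exact (ofReal_integral_eq_lintegral_ofReal (hfi i) (hfD.mono fun b hb => (hb i).1)).symm

section Convolution

variable {E : Type*} [NormedAddCommGroup E] [MeasurableSpace E]
  {μ : Measure E} {ρ F : E → ℝ}

lemma tendsto_setIntegral_comp_sub_cocompact [IsFiniteMeasureOnCompacts μ] (hρ0 : ∀ z, 0 ≤ ρ z)
    (hρ : Tendsto ρ (cocompact E) (𝓝 0)) {K : Set E} (hK : IsCompact K) :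
    Tendsto (fun x => ∫ y in K, ρ (x - y) ∂μ) (cocompact E) (𝓝 0) := by
  have hsmall : ∀ ε > 0, ∀ᶠ x in cocompact E, ∀ y ∈ K, ρ (x - y) ≤ ε := by
    intro ε hε
    obtain ⟨L, hL, hLε⟩ := mem_cocompact.mp (hρ.eventually (eventually_le_nhds hε))
    filter_upwards [(hL.add hK).compl_mem_cocompact] with x hx y hy
    exact hLε fun hxy => hx ⟨x - y, hxy, y, hy, sub_add_cancel x y⟩
  refine tendsto_order.2 ⟨fun a ha => .of_forall fun x => ha.trans_le
    (setIntegral_nonneg_of_ae_restrict (.of_forall fun y => hρ0 _)), fun a ha => ?_⟩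
  have hε : 0 < a / (μ.real K + 1) := div_pos ha (by positivity)
  filter_upwards [hsmall _ hε] with x hx
  calc ∫ y in K, ρ (x - y) ∂μ ≤ a / (μ.real K + 1) * μ.real K := by
        refine (Real.le_norm_self _).trans (norm_setIntegral_le_of_norm_le_const hK.measure_lt_top
          fun y hy => ?_)
        exact (Real.norm_of_nonneg (hρ0 _)).trans_le (hx y hy)
    _ < a := by
        rw [div_mul_eq_mul_div, div_lt_iff₀ (by positivity)]
        nlinarith [measureReal_nonneg (μ := μ) (s := K)]

variable [BorelSpace E] [μ.IsAddLeftInvariant] [μ.IsNegInvariant]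

lemma integral_comp_sub_mul_le (hρ0 : ∀ z, 0 ≤ ρ z) (hρi : Integrable ρ μ)
    (hρ1 : ∫ z, ρ z ∂μ = 1) (hF : AEStronglyMeasurable F μ) (hF0 : ∀ y, 0 ≤ F y) {M : ℝ}
    (hFM : ∀ y, F y ≤ M) (x : E) : ∫ y, ρ (x - y) * F y ∂μ ≤ M :=
  calc ∫ y, ρ (x - y) * F y ∂μ ≤ ∫ y, ρ (x - y) * M ∂μ :=
        integral_mono ((hρi.comp_sub_left x).mul_bdd hF (.of_forall fun y => by
            rw [Real.norm_of_nonneg (hF0 y)]; exact hFM y)) ((hρi.comp_sub_left x).mul_const M)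
          fun y => mul_le_mul_of_nonneg_left (hFM y) (hρ0 _)
    _ = M := by rw [integral_mul_const, integral_sub_left_eq_self, hρ1, one_mul]

lemma liminf_le_liminf_integral_comp_sub_mul [(cocompact E).NeBot] [IsFiniteMeasureOnCompacts μ]
    (hρ0 : ∀ z, 0 ≤ ρ z) (hρi : Integrable ρ μ) (hρ1 : ∫ z, ρ z ∂μ = 1)
    (hρ : Tendsto ρ (cocompact E) (𝓝 0)) (hF : AEStronglyMeasurable F μ) (hF0 : ∀ y, 0 ≤ F y)
    {M : ℝ} (hFM : ∀ y, F y ≤ M) :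
    liminf F (cocompact E) ≤ liminf (fun x => ∫ y, ρ (x - y) * F y ∂μ) (cocompact E) := by
  have hint : ∀ x, Integrable (fun y => ρ (x - y) * F y) μ := fun x =>
    (hρi.comp_sub_left x).mul_bdd hF (.of_forall fun y => by
      rw [Real.norm_of_nonneg (hF0 y)]; exact hFM y)
  have hcobdd : IsCoboundedUnder (· ≥ ·) (cocompact E) fun x => ∫ y, ρ (x - y) * F y ∂μ :=
    (isBoundedUnder_of ⟨M, integral_comp_sub_mul_le hρ0 hρi hρ1 hF hF0 hFM⟩).isCoboundedUnder_ge
  refine le_of_forall_lt_imp_le_of_dense fun c hc => ?_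
  obtain hc0 | hc0 := lt_or_ge c 0
  · exact hc0.le.trans (le_liminf_of_le hcobdd (.of_forall fun x =>
      integral_nonneg fun y => mul_nonneg (hρ0 _) (hF0 y)))
  obtain ⟨K, hK, hKc⟩ :=
    mem_cocompact.mp (eventually_lt_of_lt_liminf hc (isBoundedUnder_of ⟨0, hF0⟩))
  have hlow : ∀ x, c * (1 - ∫ y in K, ρ (x - y) ∂μ) ≤ ∫ y, ρ (x - y) * F y ∂μ := fun x =>
    calc c * (1 - ∫ y in K, ρ (x - y) ∂μ) = ∫ y in Kᶜ, ρ (x - y) * c ∂μ := by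
          rw [← hρ1, ← integral_sub_left_eq_self ρ μ x, ← integral_add_compl hK.measurableSet
            (hρi.comp_sub_left x), integral_mul_const]
          ring
      _ ≤ ∫ y in Kᶜ, ρ (x - y) * F y ∂μ :=
          setIntegral_mono_on ((hρi.comp_sub_left x).mul_const c).integrableOn (hint x).integrableOn
            hK.measurableSet.compl fun y hy => mul_le_mul_of_nonneg_left (hKc hy).le (hρ0 _)
      _ ≤ ∫ y, ρ (x - y) * F y ∂μ :=
          setIntegral_le_integral (hint x) (.of_forall fun y => mul_nonneg (hρ0 _) (hF0 y))
  have htend : Tendsto (fun x => c * (1 - ∫ y in K, ρ (x - y) ∂μ)) (cocompact E) (𝓝 c) := by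
    simpa using ((tendsto_setIntegral_comp_sub_cocompact hρ0 hρ hK).const_sub 1).const_mul c
  calc c = liminf (fun x => c * (1 - ∫ y in K, ρ (x - y) ∂μ)) (cocompact E) := htend.liminf_eq.symm
    _ ≤ _ := liminf_le_liminf (.of_forall hlow) htend.isBoundedUnder_ge hcobdd

end Convolution

section Gaussian

variable {n : ℕ} {τ : ℝ}

lemma gaussianKernel_nonneg (hτ : 0 ≤ τ) (x : EuclideanSpace ℝ (Fin n)) :
    0 ≤ gaussianKernel n τ x :=
  mul_nonneg (Real.rpow_nonneg (by positivity) _) (Real.exp_nonneg _)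

lemma measurable_gaussianKernel : Measurable (Function.uncurry (gaussianKernel n)) := by
  unfold Function.uncurry gaussianKernel
  fun_prop

lemma integral_gaussianKernel (hτ : 0 < τ) :
    ∫ x : EuclideanSpace ℝ (Fin n), gaussianKernel n τ x = 1 := by
  have hexp : ∀ x : EuclideanSpace ℝ (Fin n),
      Real.exp (-‖x‖ ^ 2 / (4 * τ)) = Real.exp (-(1 / (4 * τ)) * ‖x‖ ^ 2) := fun x => by
    congr 1; field_simp
  have hpi : Real.pi / (1 / (4 * τ)) = 4 * Real.pi * τ := by field_simp
  simp only [gaussianKernel, integral_const_mul, hexp]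
  rw [GaussianFourier.integral_rexp_neg_mul_sq_norm (by positivity), finrank_euclideanSpace_fin,
    hpi, ← Real.rpow_add (by positivity), neg_div, neg_add_cancel, Real.rpow_zero]

lemma integrable_gaussianKernel (hτ : 0 < τ) : Integrable (gaussianKernel n τ) :=
  Integrable.of_integral_ne_zero (by rw [integral_gaussianKernel hτ]; exact one_ne_zero)

lemma tendsto_gaussianKernel_cocompact (hτ : 0 < τ) :
    Tendsto (gaussianKernel n τ) (cocompact (EuclideanSpace ℝ (Fin n))) (𝓝 0) := by
  have hexp : Tendsto (fun r : ℝ => Real.exp (-r ^ 2 / (4 * τ))) atTop (𝓝 0) := by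
    refine Real.tendsto_exp_atBot.comp (Tendsto.atBot_div_const (by positivity) ?_)
    exact tendsto_neg_atTop_atBot.comp (tendsto_pow_atTop two_ne_zero)
  have h := (hexp.comp (tendsto_norm_cocompact_atTop (E := EuclideanSpace ℝ (Fin n)))).const_mul
    ((4 * Real.pi * τ) ^ (-(n : ℝ) / 2))
  rwa [mul_zero] at h

end Gaussian

noncomputable def heatSemigroup (n : ℕ) (τ : ℝ) (f : EuclideanSpace ℝ (Fin n) → ℝ)
    (x : EuclideanSpace ℝ (Fin n)) : ℝ :=
  ∫ y, gaussianKernel n τ (x - y) * f y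

section HeatSemigroup

variable {n : ℕ} {τ : ℝ} {f : EuclideanSpace ℝ (Fin n) → ℝ}

lemma heatSemigroup_nonneg (hτ : 0 ≤ τ) (hf0 : ∀ y, 0 ≤ f y) (x : EuclideanSpace ℝ (Fin n)) :
    0 ≤ heatSemigroup n τ f x :=
  integral_nonneg fun y => mul_nonneg (gaussianKernel_nonneg hτ _) (hf0 y)

lemma heatSemigroup_le (hτ : 0 < τ) (hf : AEStronglyMeasurable f) (hf0 : ∀ y, 0 ≤ f y) {M : ℝ}
    (hfM : ∀ y, f y ≤ M) (x : EuclideanSpace ℝ (Fin n)) : heatSemigroup n τ f x ≤ M :=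
  integral_comp_sub_mul_le (gaussianKernel_nonneg hτ.le) (integrable_gaussianKernel hτ)
    (integral_gaussianKernel hτ) hf hf0 hfM x

lemma liminf_le_liminf_heatSemigroup [(cocompact (EuclideanSpace ℝ (Fin n))).NeBot] (hτ : 0 < τ)
    (hf : AEStronglyMeasurable f) (hf0 : ∀ y, 0 ≤ f y) {M : ℝ} (hfM : ∀ y, f y ≤ M) :
    liminf f (cocompact _) ≤ liminf (heatSemigroup n τ f) (cocompact _) :=
  liminf_le_liminf_integral_comp_sub_mul (gaussianKernel_nonneg hτ.le)
    (integrable_gaussianKernel hτ) (integral_gaussianKernel hτ)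
    (tendsto_gaussianKernel_cocompact hτ) hf hf0 hfM

end HeatSemigroup

section Kint

variable {k : ℝ → ℝ} {a s t : ℝ}

lemma Kint_pos (hst : s < t) (hk : ContinuousOn k (Icc s t)) (hkp : ∀ r ∈ Icc s t, 0 < k r) :
    0 < Kint k s t :=
  intervalIntegral.intervalIntegral_pos_of_pos_on
    (hk.intervalIntegrable_of_Icc hst.le) (fun r hr => hkp r (Ioo_subset_Icc_self hr)) hst

lemma continuousOn_Kint_left (hat : a ≤ t) (hk : ContinuousOn k (Icc a t)) :
    ContinuousOn (fun s => Kint k s t) (Icc a t) := by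
  rw [← uIcc_of_le hat] at hk ⊢
  exact intervalIntegral.continuousOn_primitive_interval_left
    (hk.integrableOn_compact isCompact_uIcc)

end Kint

instance isCountablyGenerated_cocompact {G : Type*} [SeminormedAddCommGroup G] [ProperSpace G] :
    (cocompact G).IsCountablyGenerated := by
  rw [← Metric.cobounded_eq_cocompact, ← comap_norm_atTop]
  infer_instance

noncomputable def duhamel (n : ℕ) (h k : ℝ → ℝ) (F : ℝ → EuclideanSpace ℝ (Fin n) → ℝ) (t : ℝ)
    (x : EuclideanSpace ℝ (Fin n)) : ℝ :=
  ∫ s in (0 : ℝ)..t, h s * heatSemigroup n (Kint k s t) (F s) x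

section Duhamel

variable {n : ℕ} {h k : ℝ → ℝ} {F : ℝ → EuclideanSpace ℝ (Fin n) → ℝ} {t : ℝ}

lemma duhamel_nonneg (ht : 0 ≤ t) (hh0 : ∀ s ∈ Icc 0 t, 0 ≤ h s) (hk0 : ∀ s ∈ Icc 0 t, 0 ≤ k s)
    (hF0 : ∀ s y, 0 ≤ F s y) (x : EuclideanSpace ℝ (Fin n)) : 0 ≤ duhamel n h k F t x :=
  intervalIntegral.integral_nonneg ht fun s hs => mul_nonneg (hh0 s hs) <|
    heatSemigroup_nonneg (intervalIntegral.integral_nonneg hs.2 fun r hr =>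
      hk0 r ⟨hs.1.trans hr.1, hr.2⟩) (hF0 s) x

lemma aestronglyMeasurable_duhamel_integrand (ht : 0 ≤ t) (hh : ContinuousOn h (Icc 0 t))
    (hk : ContinuousOn k (Icc 0 t)) (hF : Measurable (Function.uncurry F))
    (x : EuclideanSpace ℝ (Fin n)) :
    AEStronglyMeasurable (fun s => h s * heatSemigroup n (Kint k s t) (F s) x)
      (volume.restrict (Ioo 0 t)) := by
  have hK : AEMeasurable (fun s => Kint k s t) (volume.restrict (Ioo 0 t)) :=
    ((continuousOn_Kint_left ht hk).mono Ioo_subset_Icc_self).aemeasurable measurableSet_Ioo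
  have hjoint : AEStronglyMeasurable
      (fun q : ℝ × EuclideanSpace ℝ (Fin n) =>
        gaussianKernel n (Kint k q.1 t) (x - q.2) * F q.1 q.2)
      ((volume.restrict (Ioo 0 t)).prod volume) :=
    ((measurable_gaussianKernel.comp_aemeasurable (hK.comp_fst.prodMk
      (measurable_const.sub measurable_snd).aemeasurable)).mul hF.aemeasurable).aestronglyMeasurable
  exact ((hh.mono Ioo_subset_Icc_self).aestronglyMeasurable measurableSet_Ioo).mul
    hjoint.integral_prod_right'

lemma integral_le_liminf_duhamel [(cocompact (EuclideanSpace ℝ (Fin n))).NeBot] (ht : 0 < t)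
    (hh : ContinuousOn h (Icc 0 t)) (hh0 : ∀ s ∈ Icc 0 t, 0 ≤ h s) (hk : ContinuousOn k (Icc 0 t))
    (hkp : ∀ s ∈ Icc 0 t, 0 < k s) (hF : Measurable (Function.uncurry F))
    (hF0 : ∀ s y, 0 ≤ F s y) {C : ℝ} (hFC : ∀ s ∈ Icc 0 t, ∀ y, F s y ≤ C) {g : ℝ → ℝ}
    (hg : ∀ s ∈ Ioo 0 t, g s ≤ h s * liminf (F s) (cocompact _)) :
    ∫ s in (0 : ℝ)..t, g s ≤ liminf (duhamel n h k F t) (cocompact _) := by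
  obtain ⟨H, hH⟩ := isCompact_Icc.exists_bound_of_continuousOn hh
  have hK : ∀ s ∈ Ioo 0 t, 0 < Kint k s t := fun s hs =>
    Kint_pos hs.2 (hk.mono (Icc_subset_Icc_left hs.1.le))
      fun r hr => hkp r ⟨hs.1.le.trans hr.1, hr.2⟩
  have hFmeas : ∀ s, Measurable (F s) := fun s => hF.comp measurable_prodMk_left
  unfold duhamel
  simp only [intervalIntegral.integral_of_le ht.le, integral_Ioc_eq_integral_Ioo]
  refine integral_le_liminf_integral (D := H * C)
    (aestronglyMeasurable_duhamel_integrand ht.le hh hk hF) ?_ ?_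
  · filter_upwards [ae_restrict_mem measurableSet_Ioo] with s hs x
    have hsI : s ∈ Icc 0 t := Ioo_subset_Icc_self hs
    exact ⟨mul_nonneg (hh0 s hsI) (heatSemigroup_nonneg (hK s hs).le (hF0 s) x),
      mul_le_mul ((le_abs_self _).trans (hH s hsI))
        (heatSemigroup_le (hK s hs) (hFmeas s).aestronglyMeasurable (hF0 s) (hFC s hsI) x)
        (heatSemigroup_nonneg (hK s hs).le (hF0 s) x) ((abs_nonneg _).trans (hH s hsI))⟩
  · filter_upwards [ae_restrict_mem measurableSet_Ioo] with s hs
    have hsI : s ∈ Icc 0 t := Ioo_subset_Icc_self hs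
    calc g s ≤ h s * liminf (F s) (cocompact _) := hg s hs
      _ ≤ h s * liminf (heatSemigroup n (Kint k s t) (F s)) (cocompact _) :=
          mul_le_mul_of_nonneg_left (liminf_le_liminf_heatSemigroup (hK s hs)
            (hFmeas s).aestronglyMeasurable (hF0 s) (hFC s hsI)) (hh0 s hsI)
      _ = liminf (fun x => h s * heatSemigroup n (Kint k s t) (F s) x) (cocompact _) :=
          (monotone_mul_left_of_nonneg (hh0 s hsI)).map_liminf_of_continuousAt _
            (continuous_const_mul _).continuousAt
            (isBoundedUnder_of ⟨C, heatSemigroup_le (hK s hs) (hFmeas s).aestronglyMeasurable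
              (hF0 s) (hFC s hsI)⟩).isCoboundedUnder_ge
            (isBoundedUnder_of ⟨0, heatSemigroup_nonneg (hK s hs).le (hF0 s)⟩)

lemma integral_le_liminf_duhamel_rpow_mul_rpow [(cocompact (EuclideanSpace ℝ (Fin n))).NeBot]
    (ht : 0 < t) (hh : ContinuousOn h (Icc 0 t)) (hh0 : ∀ s ∈ Icc 0 t, 0 ≤ h s)
    (hk : ContinuousOn k (Icc 0 t)) (hkp : ∀ s ∈ Icc 0 t, 0 < k s)
    {a b : ℝ → EuclideanSpace ℝ (Fin n) → ℝ} (ha : Measurable (Function.uncurry a))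
    (hb : Measurable (Function.uncurry b)) (ha0 : ∀ s y, 0 ≤ a s y) (hb0 : ∀ s y, 0 ≤ b s y)
    {C : ℝ} (haC : ∀ s ∈ Icc 0 t, ∀ y, a s y ≤ C) (hbC : ∀ s ∈ Icc 0 t, ∀ y, b s y ≤ C)
    {p q : ℝ} (hp : 0 ≤ p) (hq : 0 ≤ q) :
    ∫ s in (0 : ℝ)..t, h s * liminf (a s) (cocompact _) ^ p * liminf (b s) (cocompact _) ^ q ≤
      liminf (duhamel n h k (fun s y => a s y ^ p * b s y ^ q) t) (cocompact _) :=
  integral_le_liminf_duhamel ht hh hh0 hk hkp ((ha.pow_const p).mul (hb.pow_const q))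
    (fun s y => mul_nonneg (Real.rpow_nonneg (ha0 s y) p) (Real.rpow_nonneg (hb0 s y) q))
    (fun s hs y => mul_le_mul (Real.rpow_le_rpow (ha0 s y) (haC s hs y) hp)
      (Real.rpow_le_rpow (hb0 s y) (hbC s hs y) hq) (Real.rpow_nonneg (hb0 s y) q)
      (Real.rpow_nonneg ((ha0 s y).trans (haC s hs y)) p))
    fun s hs => by
      have hsI := Ioo_subset_Icc_self hs
      rw [mul_assoc]
      exact mul_le_mul_of_nonneg_left (rpow_liminf_mul_rpow_liminf_le (ha0 s)
        (isBoundedUnder_of ⟨C, haC s hsI⟩) (hb0 s) (isBoundedUnder_of ⟨C, hbC s hsI⟩) hp hq)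
        (hh0 s hsI)

end Duhamel

theorem statement4_general (n : ℕ) (hn : 1 ≤ n)
    (p : Fin 2 → Fin 2 → ℝ) (hp : ∀ i j, 0 ≤ p i j)
    (h k : Fin 2 → ℝ → ℝ)
    (hhc : ∀ i, ContinuousOn (h i) (Set.Ici 0))
    (hhp : ∀ i, ∀ t : ℝ, 0 ≤ t → 0 < h i t)
    (hkc : ∀ i, ContinuousOn (k i) (Set.Ici 0))
    (hkp : ∀ i, ∀ t : ℝ, 0 ≤ t → 0 < k i t)
    (φ : Fin 2 → EuclideanSpace ℝ (Fin n) → ℝ)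
    (hφc : ∀ i, Continuous (φ i))
    (hφnn : ∀ i x, 0 ≤ φ i x)
    (hφb : ∀ i, ∃ C : ℝ, ∀ x, φ i x ≤ C)
    (hφlim : ∀ i, Filter.Tendsto (φ i)
      (Filter.cocompact (EuclideanSpace ℝ (Fin n))) (nhds (⨆ x, φ i x)))
    (T : ℝ)
    (u : Fin 2 → ℝ → EuclideanSpace ℝ (Fin n) → ℝ)
    (hu : IsMildSolutionIco n p h k φ T u) :
    ∀ i, ∀ t ∈ Set.Ico (0:ℝ) T,
      (⨆ x, φ i x) +
          (∫ s in (0:ℝ)..t,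
            h i s *
              (Filter.liminf (fun x => u i s x)
                (Filter.cocompact (EuclideanSpace ℝ (Fin n)))) ^ p i i *
              (Filter.liminf (fun x => u (1 - i) s x)
                (Filter.cocompact (EuclideanSpace ℝ (Fin n)))) ^ p i (1 - i)) ≤
        Filter.liminf (fun x => u i t x)
          (Filter.cocompact (EuclideanSpace ℝ (Fin n))) := by
  obtain ⟨hmeas, hnonneg, hbdd, hinit, hmild⟩ := hu
  have : Nontrivial (EuclideanSpace ℝ (Fin n)) :=
    Module.nontrivial_of_finrank_pos (R := ℝ) (by rw [finrank_euclideanSpace_fin]; omega)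
  rintro i t ⟨ht0, htT⟩
  obtain rfl | ht := ht0.eq_or_lt
  · rw [intervalIntegral.integral_same, add_zero, funext (hinit i), (hφlim i).liminf_eq]
  obtain ⟨C, hC⟩ := hbdd t htT
  obtain ⟨M, hM⟩ := hφb i
  have hK : 0 < Kint (k i) 0 t :=
    Kint_pos ht ((hkc i).mono Icc_subset_Ici_self) fun r hr => hkp i r hr.1
  have hinitial : ⨆ x, φ i x ≤ liminf (heatSemigroup n (Kint (k i) 0 t) (φ i)) (cocompact _) :=
    (hφlim i).liminf_eq ▸
      liminf_le_liminf_heatSemigroup hK (hφc i).aestronglyMeasurable (hφnn i) hM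
  have hduhamel := integral_le_liminf_duhamel_rpow_mul_rpow ht
    ((hhc i).mono Icc_subset_Ici_self) (fun s hs => (hhp i s hs.1).le)
    ((hkc i).mono Icc_subset_Ici_self) (fun s hs => hkp i s hs.1) (hmeas i) (hmeas (1 - i))
    (hnonneg i) (hnonneg (1 - i)) (hC i) (hC (1 - i)) (hp i i) (hp i (1 - i))
  have hsplit := hmild i t ⟨ht, htT⟩
  calc _ ≤ _ := add_le_add hinitial hduhamel
    _ ≤ _ := le_liminf_add_of_nonneg (heatSemigroup_nonneg hK.le (hφnn i))
        (duhamel_nonneg ht0 (fun s hs => (hhp i s hs.1).le) (fun s hs => (hkp i s hs.1).le)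
          fun s y => mul_nonneg (Real.rpow_nonneg (hnonneg i s y) _) (Real.rpow_nonneg (hnonneg _ s y) _))
        fun x => (hsplit x).symm ▸ hC i t ⟨ht0, le_rfl⟩ x
    _ = _ := liminf_congr (.of_forall fun x => (hsplit x).symm)

/-- the liminf integral inequality (inequality (3.4) of the paper).
If each `φᵢ` tends to its supremum at space infinity, then for every `t ∈ [0,T)`
the liminf at space infinity of `uᵢ(t,·)` dominates
`sup φᵢ + ∫₀ᵗ hᵢ(s) (liminf uᵢ(s))^{pᵢᵢ} (liminf uⱼ(s))^{pᵢⱼ} ds`. -/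
theorem statement4 (n : ℕ) (hn : 1 ≤ n)
    (p : Fin 2 → Fin 2 → ℝ) (hp : ∀ i j, 0 ≤ p i j)
    (h k : Fin 2 → ℝ → ℝ)
    (hhc : ∀ i, ContinuousOn (h i) (Set.Ici 0))
    (hhp : ∀ i, ∀ t : ℝ, 0 ≤ t → 0 < h i t)
    (hkc : ∀ i, ContinuousOn (k i) (Set.Ici 0))
    (hkp : ∀ i, ∀ t : ℝ, 0 ≤ t → 0 < k i t)
    (φ : Fin 2 → EuclideanSpace ℝ (Fin n) → ℝ)
    (hφc : ∀ i, Continuous (φ i))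
    (hφnn : ∀ i x, 0 ≤ φ i x)
    (hφb : ∀ i, ∃ C : ℝ, ∀ x, φ i x ≤ C)
    (hφlim : ∀ i, Filter.Tendsto (φ i)
      (Filter.cocompact (EuclideanSpace ℝ (Fin n))) (nhds (⨆ x, φ i x)))
    (T : ℝ) (hT : 0 < T)
    (u : Fin 2 → ℝ → EuclideanSpace ℝ (Fin n) → ℝ)
    (hu : IsMildSolutionIco n p h k φ T u) :
    ∀ i, ∀ t ∈ Set.Ico (0:ℝ) T,
      (⨆ x, φ i x) +
          (∫ s in (0:ℝ)..t,
            h i s *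
              (Filter.liminf (fun x => u i s x)
                (Filter.cocompact (EuclideanSpace ℝ (Fin n)))) ^ p i i *
              (Filter.liminf (fun x => u (1 - i) s x)
                (Filter.cocompact (EuclideanSpace ℝ (Fin n)))) ^ p i (1 - i)) ≤
        Filter.liminf (fun x => u i t x)
          (Filter.cocompact (EuclideanSpace ℝ (Fin n))) :=
  statement4_general n hn p hp h k hhc hhp hkc hkp φ hφc hφnn hφb hφlim T u hu
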